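/- With the setting of transductive classification, assume G ∈ B(G) and let θ* minimize the clean loss L01(f_θ) over parameters θ. Let f̃_{θ*} be the memorization of f_{θ*} (i.e., f̃_{θ*}(G') = f_{θ*}(G) for all G'). Then Ladv(f̃_{θ*}) = inf_θ Ladv(f̃_θ) and inf_θ Ladv(f̃_θ) ≤ inf_θ Ladv(f_θ). In particular, f̃_{θ*} is an optimal solution of the saddle-point problem min_θ max_{G' ∈ B(G)} L01 evaluated on G'. -/
import Mathlib


/-- Clean transductive 0/1 loss over test indices i with m ≤ i (i.e. nodes m+1,…,n). -/
noncomputable def L01 {I Y : Type*} [DecidableEq Y] {n : ℕ} (G : I) (y : Fin n → Y) (m : ℕ)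
    (h : I → Fin n → Y) : ℕ :=
  ∑ i ∈ Finset.univ.filter (fun i : Fin n => m ≤ (i : ℕ)), if h G i = y i then 0 else 1

/-- Adversarial 0/1 loss: supremum of the test loss over perturbed inputs in B. -/
noncomputable def Ladv {I Y : Type*} [DecidableEq Y] {n : ℕ} (B : Set I) (y : Fin n → Y) (m : ℕ)
    (h : I → Fin n → Y) : ℕ :=
  sSup ((fun G' => ∑ i ∈ Finset.univ.filter (fun i : Fin n => m ≤ (i : ℕ)),
    if h G' i = y i then 0 else 1) '' B)

lemma Ladv_const {I Y : Type*} [DecidableEq Y] {n : ℕ} {B : Set I} (hB : B.Nonempty)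
    (y : Fin n → Y) (m : ℕ) (c : Fin n → Y) :
    Ladv B y m (fun _ => c) = ∑ i ∈ Finset.univ.filter (fun i : Fin n => m ≤ (i : ℕ)),
      (if c i = y i then 0 else 1) := by
  unfold Ladv
  have : ((fun _ : I => ∑ i ∈ Finset.univ.filter (fun i : Fin n => m ≤ (i : ℕ)),
      if c i = y i then 0 else 1) '' B) =
      {∑ i ∈ Finset.univ.filter (fun i : Fin n => m ≤ (i : ℕ)), if c i = y i then 0 else 1} := by
    apply Set.Subsingleton.eq_singleton_of_mem
    · rintro a ⟨x, _, rfl⟩ b ⟨z, _, rfl⟩; rfl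
    · exact ⟨hB.choose, hB.choose_spec, rfl⟩
  rw [this, csSup_singleton]

lemma Ladv_bddAbove {I Y : Type*} [DecidableEq Y] {n : ℕ} (B : Set I)
    (y : Fin n → Y) (m : ℕ) (h : I → Fin n → Y) :
    BddAbove ((fun G' => ∑ i ∈ Finset.univ.filter (fun i : Fin n => m ≤ (i : ℕ)),
      if h G' i = y i then 0 else 1) '' B) := by
  refine ⟨(Finset.univ.filter (fun i : Fin n => m ≤ (i : ℕ))).card, ?_⟩
  rintro a ⟨x, _, rfl⟩
  calc (∑ i ∈ Finset.univ.filter (fun i : Fin n => m ≤ (i : ℕ)),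
        if h x i = y i then 0 else 1)
      ≤ ∑ _i ∈ Finset.univ.filter (fun i : Fin n => m ≤ (i : ℕ)), 1 := by
        apply Finset.sum_le_sum; intro i _; split <;> omega
    _ = _ := by simp

/-- If θ* minimizes the clean loss, the memorization of f_{θ*} is an optimal solution
of the adversarial-training saddle-point problem. -/
theorem memorization_solves_adversarial_training {I Y Θ : Type*} [DecidableEq Y] {n m : ℕ}
    (G : I) (B : Set I) (hG : G ∈ B) (y : Fin n → Y)
    (f : Θ → I → Fin n → Y) (θs : Θ)
    (hmin : ∀ θ : Θ, L01 G y m (f θs) ≤ L01 G y m (f θ)) :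
    Ladv B y m (fun _ => f θs G) = (⨅ θ : Θ, Ladv B y m (fun _ => f θ G)) ∧
    (⨅ θ : Θ, Ladv B y m (fun _ => f θ G)) ≤ ⨅ θ : Θ, Ladv B y m (f θ) := by
  have hB : B.Nonempty := ⟨G, hG⟩
  have : Nonempty Θ := ⟨θs⟩
  have hconst : ∀ θ : Θ, Ladv B y m (fun _ => f θ G) = L01 G y m (f θ) := fun θ =>
    Ladv_const hB y m (f θ G)
  have hinf : (⨅ θ : Θ, Ladv B y m (fun _ => f θ G)) = L01 G y m (f θs) := by
    apply le_antisymm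
    · exact (ciInf_le (OrderBot.bddBelow _) θs).trans_eq (hconst θs)
    · exact le_ciInf fun θ => (hconst θ).symm ▸ hmin θ
  constructor
  · rw [hinf, hconst θs]
  · refine le_ciInf fun θ => ?_
    rw [hinf]
    calc L01 G y m (f θs) ≤ L01 G y m (f θ) := hmin θ
      _ ≤ Ladv B y m (f θ) :=
        le_csSup (Ladv_bddAbove B y m (f θ)) ⟨G, hG, rfl⟩
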